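/- arXiv:2605.04235 — 2 statements merged into one kernel-verified Lean document; each statement's English description precedes it below -/
import Mathlib

section
/- Let m ≥ 1 be a natural number and let Ψ, D be real numbers with D ≥ 0 and Ψ > m·D. Let A and B be finite sets of active edges with |A| < |B| ≤ m, and let d_A : A → ℝ and d_B : B → ℝ be distance functions with 0 ≤ d_A(e) ≤ D for all e ∈ A and 0 ≤ d_B(e) ≤ D for all e ∈ B. Then ∑_{e ∈ A} (d_A(e) − Ψ) > ∑_{e ∈ B} (d_B(e) − Ψ). In other words, when the active-edge weight Ψ is sufficiently large relative to the number of edges and the maximum seat separation, any reduction in the number of active edges strictly dominates any possible gain obtained from the distance-maximization term, so the objective is hierarchical: fewer active edges always yield a strictly larger objective value. -/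
/-- If `m ≥ 1`, `D ≥ 0` and `Ψ > m·D`, and `A`, `B` are finite sets of
active edges with `|A| < |B| ≤ m` whose distance functions take values in `[0, D]`,
then `∑ e ∈ A, (d_A e − Ψ) > ∑ e ∈ B, (d_B e − Ψ)`: fewer active edges always yield a
strictly larger objective value. -/
theorem ssap_hierarchical_objective
    {α β : Type*} (m : ℕ) (hm : 1 ≤ m) (Ψ D : ℝ) (hD : 0 ≤ D) (hΨ : Ψ > m * D)
    (A : Finset α) (B : Finset β)
    (hAB : A.card < B.card) (hBm : B.card ≤ m)
    (dA : α → ℝ) (dB : β → ℝ)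
    (hdA : ∀ e ∈ A, 0 ≤ dA e ∧ dA e ≤ D)
    (hdB : ∀ e ∈ B, 0 ≤ dB e ∧ dB e ≤ D) :
    ∑ e ∈ A, (dA e - Ψ) > ∑ e ∈ B, (dB e - Ψ) := by
  have h1 : ∑ e ∈ A, (dA e - Ψ) ≥ ∑ _e ∈ A, (0 - Ψ) := by
    apply Finset.sum_le_sum
    intro e he
    linarith [(hdA e he).1]
  have h2 : ∑ e ∈ B, (dB e - Ψ) ≤ ∑ _e ∈ B, (D - Ψ) := by
    apply Finset.sum_le_sum
    intro e he
    linarith [(hdB e he).2]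
  rw [Finset.sum_const, nsmul_eq_mul] at h1 h2
  have hcard : (A.card : ℝ) + 1 ≤ (B.card : ℝ) := by exact_mod_cast hAB
  have hBle : (B.card : ℝ) ≤ m := by exact_mod_cast hBm
  have hBD : (B.card : ℝ) * D ≤ m * D := by
    apply mul_le_mul_of_nonneg_right hBle hD
  have hΨ0 : (0:ℝ) ≤ Ψ := le_of_lt (lt_of_le_of_lt (mul_nonneg (Nat.cast_nonneg m) hD) hΨ)
  nlinarith [mul_nonneg (by linarith : (0:ℝ) ≤ (B.card:ℝ) - A.card - 1) hΨ0]
end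

section
/- Let E be a finite set of conflict edges with |E| ≥ 1, let d_min and Ψ be real numbers with 0 ≤ d_min < Ψ, and set the penalty factor φ = 2·|E|·(Ψ − d_min). Consider a feasible solution with active edge set A ⊆ E and distances d_A : A → ℝ satisfying d_min ≤ d_A(e) ≤ Ψ for all e ∈ A, whose penalized objective equals its objective f_feas = ∑_{e ∈ A} (d_A(e) − Ψ) since its total violation count is zero. Consider an infeasible solution with active edge set B, distances d_B : B → ℝ satisfying 0 ≤ d_B(e) ≤ Ψ for all e ∈ B, and total violation count v ≥ 1, whose penalized objective is f_p = ∑_{e ∈ B} (d_B(e) − Ψ) − φ·v. Then f_p < f_feas. That is, with this calibration of φ the penalized objective function never evaluates an infeasible solution more favorably than any feasible solution. -/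
/-!
Each active edge of the feasible solution contributes at least `d_min - Ψ`, so its objective is
at least `-|E| (Ψ - d_min)`, while every term of the infeasible objective is nonpositive. A single
violation already costs `φ = 2 |E| (Ψ - d_min) > |E| (Ψ - d_min)`, which exceeds the whole
possible gap.
-/

theorem neg_card_mul_le_sum_sub_of_subset {α : Type*} {A E : Finset α} (hAE : A ⊆ E)
    {f : α → ℝ} {a b : ℝ} (hab : a ≤ b) (hf : ∀ e ∈ A, a ≤ f e) :
    -(E.card * (b - a)) ≤ ∑ e ∈ A, (f e - b) := by
  have hcard : (A.card : ℝ) ≤ E.card := by exact_mod_cast Finset.card_le_card hAE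
  calc -(E.card * (b - a)) ≤ -(A.card * (b - a)) := by gcongr
    _ = A.card • (a - b) := by rw [nsmul_eq_mul]; ring
    _ ≤ ∑ e ∈ A, (f e - b) :=
      Finset.card_nsmul_le_sum _ _ _ fun e he => sub_le_sub_right (hf e he) b

theorem ssap_penalty_calibration_general
    {α β : Type*}
    (E : Finset α) (hE : 1 ≤ E.card)
    (dmin Ψ : ℝ) (hΨ : dmin < Ψ)
    (φ : ℝ) (hφ : φ = 2 * E.card * (Ψ - dmin))
    (A : Finset α) (hAE : A ⊆ E) (dA : α → ℝ)
    (hdA : ∀ e ∈ A, dmin ≤ dA e ∧ dA e ≤ Ψ)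
    (B : Finset β) (dB : β → ℝ)
    (hdB : ∀ e ∈ B, 0 ≤ dB e ∧ dB e ≤ Ψ)
    (v : ℕ) (hv : 1 ≤ v) :
    ∑ e ∈ B, (dB e - Ψ) - φ * v < ∑ e ∈ A, (dA e - Ψ) := by
  have hB : ∑ e ∈ B, (dB e - Ψ) ≤ 0 :=
    Finset.sum_nonpos fun e he => sub_nonpos.2 (hdB e he).2
  have hA : -(E.card * (Ψ - dmin)) ≤ ∑ e ∈ A, (dA e - Ψ) :=
    neg_card_mul_le_sum_sub_of_subset hAE hΨ.le fun e he => (hdA e he).1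
  have hgap : 0 < (E.card : ℝ) * (Ψ - dmin) :=
    mul_pos (by exact_mod_cast hE) (sub_pos.2 hΨ)
  have hv' : (1 : ℝ) ≤ v := by exact_mod_cast hv
  have hpenalty : (E.card : ℝ) * (Ψ - dmin) < φ * v := by
    rw [hφ]; nlinarith
  linarith

/-- With `|E| ≥ 1`, `0 ≤ d_min < Ψ`, and penalty factor
`φ = 2·|E|·(Ψ − d_min)`, the penalized objective of any infeasible solution
(active edges `B` with distances in `[0, Ψ]`, violation count `v ≥ 1`) is strictly
smaller than the objective of any feasible solution (active edges `A ⊆ E` with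
distances in `[d_min, Ψ]`). -/
theorem ssap_penalty_calibration
    {α β : Type*} [DecidableEq α]
    (E : Finset α) (hE : 1 ≤ E.card)
    (dmin Ψ : ℝ) (hdmin : 0 ≤ dmin) (hΨ : dmin < Ψ)
    (φ : ℝ) (hφ : φ = 2 * E.card * (Ψ - dmin))
    (A : Finset α) (hAE : A ⊆ E) (dA : α → ℝ)
    (hdA : ∀ e ∈ A, dmin ≤ dA e ∧ dA e ≤ Ψ)
    (B : Finset β) (dB : β → ℝ)
    (hdB : ∀ e ∈ B, 0 ≤ dB e ∧ dB e ≤ Ψ)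
    (v : ℕ) (hv : 1 ≤ v) :
    ∑ e ∈ B, (dB e - Ψ) - φ * v < ∑ e ∈ A, (dA e - Ψ) :=
  ssap_penalty_calibration_general E hE dmin Ψ hΨ φ hφ A hAE dA hdA B dB hdB v hv
end
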